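/- Let {N_λ}_{λ∈Λ} be an inductive system of cofinitely generated Z_p-modules over a directed set Λ such that the image of N_λ in N_{λ'} has divisible cokernel for λ' ≥ λ, let L be a cofinitely generated Z_p-module, and {f_λ : N_λ → L} a compatible family of maps with limit f_∞ : N_∞ = colim N_λ → L. Then there exists λ₀ ∈ Λ such that Image(f_λ) = Image(f_{λ₀}) for all λ ≥ λ₀. -/

import Mathlib

abbrev QpModZp (p : ℕ) [Fact p.Prime] :=
  ℚ_[p] ⧸ LinearMap.range (Algebra.linearMap ℤ_[p] ℚ_[p])

def CofinGen (p : ℕ) [Fact p.Prime] (A : Type*) [AddCommGroup A] [Module ℤ_[p] A] : Prop :=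
  Module.Finite ℤ_[p] (A →ₗ[ℤ_[p]] QpModZp p)

def IsDivisibleSubmodule (p : ℕ) [Fact p.Prime] {A : Type*} [AddCommGroup A] [Module ℤ_[p] A]
    (D : Submodule ℤ_[p] A) : Prop :=
  ∀ x ∈ D, ∃ y ∈ D, (p : ℤ_[p]) • y = x

noncomputable def divPart (p : ℕ) [Fact p.Prime] (A : Type*) [AddCommGroup A] [Module ℤ_[p] A] :
    Submodule ℤ_[p] A :=
  sSup {D | IsDivisibleSubmodule p D}

abbrev Cotor (p : ℕ) [Fact p.Prime] (A : Type*) [AddCommGroup A] [Module ℤ_[p] A] :=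
  A ⧸ divPart p A

/-! Dualize with `L^∨ = Hom(L, ℚ_p/ℤ_p)`, a finitely generated `ℤ_p`-module. The annihilators
`A_λ ⊆ L^∨` of `Image(f_λ)` decrease in `λ`, and divisibility of the cokernels makes `A_{λ'}`
saturated in `A_λ`: if `a • φ ∈ A_{λ'}` with `a ≠ 0` and `φ ∈ A_λ`, then `φ ∈ A_{λ'}`. For `λ₀`
minimizing `rank A_λ`, each `A_{λ₀} / A_λ` with `λ ≥ λ₀` is torsion, hence zero by saturation.
Since `ℚ_p/ℤ_p` is an injective cogenerator, a submodule of `L` is cut out by its annihilator,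
so the images agree as well. -/

open Module LinearMap

section Rank

variable {R M : Type*} [CommRing R] [IsDomain R] [AddCommGroup M] [Module R M]

theorem Submodule.exists_smul_mem_of_le_of_finrank_le [IsNoetherian R M] {S T : Submodule R M}
    (hST : S ≤ T) (hrank : finrank R T ≤ finrank R S) {x : M} (hx : x ∈ T) :
    ∃ a : R, a ≠ 0 ∧ a • x ∈ S := by
  set S' := S.comap T.subtype
  have hS' : finrank R S' = finrank R S := (Submodule.comapSubtypeEquivOfLe hST).finrank_eq
  have htors : finrank R (T ⧸ S') = 0 := by
    have := S'.finrank_quotient_add_finrank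
    omega
  obtain ⟨a, ha, hax⟩ := Module.finrank_eq_zero_iff.mp htors (S'.mkQ ⟨x, hx⟩)
  rw [← map_smul, Submodule.mkQ_apply, Submodule.Quotient.mk_eq_zero] at hax
  exact ⟨a, ha, hax⟩

theorem Submodule.exists_forall_ge_eq_of_antitone {Λ : Type*} [Preorder Λ] [Nonempty Λ]
    [IsNoetherian R M] {A : Λ → Submodule R M} (hA : Antitone A)
    (hsat : ∀ i j, i ≤ j → ∀ x ∈ A i, ∀ a : R, a ≠ 0 → a • x ∈ A j → x ∈ A j) :
    ∃ i₀, ∀ i, i₀ ≤ i → A i = A i₀ := by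
  let d (i : Λ) := finrank R (A i)
  refine ⟨Function.argmin d, fun i hi => le_antisymm (hA hi) fun x hx => ?_⟩
  obtain ⟨a, ha, hax⟩ := exists_smul_mem_of_le_of_finrank_le (hA hi) (Function.argmin_le d i) hx
  exact hsat _ i hi x hx a ha hax

end Rank

theorem Module.Baer.of_smul_surjective {R Q : Type*} [CommRing R] [IsPrincipalIdealRing R]
    [AddCommGroup Q] [Module R Q] (h : ∀ c : R, c ≠ 0 → Function.Surjective (c • · : Q → Q)) :
    Module.Baer R Q := by
  intro I g
  obtain ⟨c, rfl⟩ := (IsPrincipalIdealRing.principal I).principal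
  have hc : c ∈ Ideal.span {c} := Ideal.mem_span_singleton_self c
  by_cases hc0 : c = 0
  · subst hc0
    refine ⟨0, fun x hx => ?_⟩
    obtain rfl : x = 0 := by simpa using hx
    exact (map_zero g).symm
  obtain ⟨e, he⟩ := h c hc0 (g ⟨c, hc⟩)
  refine ⟨LinearMap.toSpanSingleton R Q e, fun x hx => ?_⟩
  obtain ⟨r, rfl⟩ := Ideal.mem_span_singleton'.mp hx
  have : (⟨r * c, hx⟩ : Ideal.span {c}) = r • ⟨c, hc⟩ := rfl
  simp only [this, map_smul, ← he, LinearMap.toSpanSingleton_apply, mul_smul]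

namespace PadicInt

variable {p : ℕ} [Fact p.Prime]

theorem mem_of_smul_mem {M : Type*} [AddCommGroup M] [Module ℤ_[p] M] {S T : Submodule ℤ_[p] M}
    (hp : ∀ x ∈ T, (p : ℤ_[p]) • x ∈ S → x ∈ S) {x : M} (hx : x ∈ T) {a : ℤ_[p]}
    (ha : a ≠ 0) (hax : a • x ∈ S) : x ∈ S := by
  have hpow : ∀ (k : ℕ) (x : M), x ∈ T → (p : ℤ_[p]) ^ k • x ∈ S → x ∈ S := by
    intro k
    induction k with
    | zero => simp
    | succ k ih =>
      intro x hx hkx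
      rw [pow_succ, mul_smul] at hkx
      exact hp x hx (ih _ (T.smul_mem _ hx) hkx)
  refine hpow a.valuation x hx ?_
  have hunit : a • x = unitCoeff ha • (p : ℤ_[p]) ^ a.valuation • x := by
    rw [Units.smul_def, smul_smul, ← unitCoeff_spec ha]
  rw [← inv_smul_smul (unitCoeff ha) ((p : ℤ_[p]) ^ a.valuation • x), ← hunit]
  exact S.smul_of_tower_mem _ hax

end PadicInt

namespace QpModZp

variable {p : ℕ} [Fact p.Prime]

theorem mk_eq_zero_iff (x : ℚ_[p]) : (Submodule.Quotient.mk x : QpModZp p) = 0 ↔ ‖x‖ ≤ 1 := by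
  rw [Submodule.Quotient.mk_eq_zero]
  exact ⟨by rintro ⟨z, rfl⟩; exact z.norm_le_one, fun h => ⟨⟨x, h⟩, rfl⟩⟩

theorem smul_surjective {c : ℤ_[p]} (hc : c ≠ 0) :
    Function.Surjective (c • · : QpModZp p → QpModZp p) := by
  intro y
  obtain ⟨y, rfl⟩ := Submodule.Quotient.mk_surjective _ y
  refine ⟨Submodule.Quotient.mk ((c : ℚ_[p])⁻¹ * y), ?_⟩
  change c • Submodule.Quotient.mk _ = _
  rw [← Submodule.Quotient.mk_smul, Algebra.smul_def, PadicInt.algebraMap_apply,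
    mul_inv_cancel_left₀ (PadicInt.coe_ne_zero.mpr hc)]

theorem baer : Module.Baer ℤ_[p] (QpModZp p) :=
  Module.Baer.of_smul_surjective fun _ => smul_surjective

theorem exists_apply_ne_zero {M : Type*} [AddCommGroup M] [Module ℤ_[p] M] {x : M}
    (hx : x ≠ 0) : ∃ φ : M →ₗ[ℤ_[p]] QpModZp p, φ x ≠ 0 := by
  let χ : ℤ_[p] →ₗ[ℤ_[p]] QpModZp p :=
    (Submodule.mkQ _).comp (LinearMap.toSpanSingleton ℤ_[p] ℚ_[p] (p : ℚ_[p])⁻¹)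
  have hχ (a : ℤ_[p]) : χ a = Submodule.Quotient.mk ((a : ℚ_[p]) * (p : ℚ_[p])⁻¹) := rfl
  have hχ1 : χ 1 ≠ 0 := by
    rw [hχ, PadicInt.coe_one, one_mul, Ne, mk_eq_zero_iff, norm_inv, Padic.norm_p, inv_inv,
      not_le]
    exact_mod_cast (Fact.out : p.Prime).one_lt
  have hχp : Ideal.torsionOf ℤ_[p] M x ≤ ker χ := by
    have hI : Ideal.torsionOf ℤ_[p] M x ≠ ⊤ := by
      rw [Ne, Ideal.eq_top_iff_one, Ideal.mem_torsionOf_iff, one_smul]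
      exact hx
    refine (IsLocalRing.le_maximalIdeal hI).trans ?_
    rw [PadicInt.maximalIdeal_eq_span_p, Ideal.span_singleton_le_iff_mem, mem_ker, hχ,
      PadicInt.coe_natCast, mul_inv_cancel₀ (by exact_mod_cast (Fact.out : p.Prime).ne_zero),
      mk_eq_zero_iff, norm_one]
  let e := Ideal.quotTorsionOfEquivSpanSingleton ℤ_[p] M x
  obtain ⟨φ, hφ⟩ := baer.extension_property (ℤ_[p] ∙ x).subtype Subtype.coe_injective
    ((Ideal.torsionOf ℤ_[p] M x).liftQ χ hχp ∘ₗ e.symm.toLinearMap)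
  refine ⟨φ, ?_⟩
  have hx1 : (e (Submodule.Quotient.mk 1) : M) = x := by
    rw [Ideal.quotTorsionOfEquivSpanSingleton_apply_mk, one_smul]
  have := LinearMap.congr_fun hφ (e (Submodule.Quotient.mk 1))
  simp only [LinearMap.comp_apply, Submodule.subtype_apply, LinearEquiv.coe_coe, hx1,
    LinearEquiv.symm_apply_apply, Submodule.liftQ_apply] at this
  rwa [this]

theorem exists_le_ker_apply_ne_zero {L : Type*} [AddCommGroup L] [Module ℤ_[p] L]
    {R : Submodule ℤ_[p] L} {x : L} (hx : x ∉ R) :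
    ∃ φ : L →ₗ[ℤ_[p]] QpModZp p, R ≤ ker φ ∧ φ x ≠ 0 := by
  obtain ⟨φ, hφ⟩ := exists_apply_ne_zero (p := p) (x := R.mkQ x) (by simpa using hx)
  refine ⟨φ ∘ₗ R.mkQ, fun y hy => ?_, hφ⟩
  simp [(Submodule.Quotient.mk_eq_zero R).mpr hy]

theorem range_le_range_of_ker_lcomp_le {M M' L : Type*} [AddCommGroup M] [Module ℤ_[p] M]
    [AddCommGroup M'] [Module ℤ_[p] M'] [AddCommGroup L] [Module ℤ_[p] L]
    {g : M →ₗ[ℤ_[p]] L} {g' : M' →ₗ[ℤ_[p]] L}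
    (h : ker (lcomp ℤ_[p] (QpModZp p) g) ≤ ker (lcomp ℤ_[p] (QpModZp p) g')) :
    range g' ≤ range g := by
  rintro _ ⟨m, rfl⟩
  by_contra hm
  obtain ⟨φ, hφ, hφm⟩ := exists_le_ker_apply_ne_zero hm
  have hφg : φ ∈ ker (lcomp ℤ_[p] (QpModZp p) g) := by
    ext n
    exact hφ ⟨n, rfl⟩
  exact hφm (LinearMap.congr_fun (h hφg) m)

end QpModZp

theorem LinearMap.mem_ker_lcomp_of_smul_mem {R M M' L E : Type*} [CommRing R]
    [AddCommGroup M] [Module R M] [AddCommGroup M'] [Module R M'] [AddCommGroup L] [Module R L]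
    [AddCommGroup E] [Module R E] {t : M →ₗ[R] M'} {g : M' →ₗ[R] L} {r : R}
    (ht : ∀ x, ∃ y z, t z = x - r • y) {φ : L →ₗ[R] E} (hφ : φ ∈ ker (lcomp R E (g ∘ₗ t)))
    (hrφ : r • φ ∈ ker (lcomp R E g)) : φ ∈ ker (lcomp R E g) := by
  rw [mem_ker, lcomp_apply'] at hφ hrφ ⊢
  ext x
  obtain ⟨y, z, hz⟩ := ht x
  have h1 : φ (g (t z)) = 0 := congr($hφ z)
  have h2 : r • φ (g y) = 0 := congr($hrφ y)
  rw [comp_apply, ← sub_add_cancel x (r • y), ← hz, map_add, map_add, map_smul, map_smul, h1, h2,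
    add_zero, zero_apply]

theorem stmt9_general {p : ℕ} [Fact p.Prime]
    {Λ : Type*} [Preorder Λ] [Nonempty Λ]
    (N : Λ → Type*) [∀ l, AddCommGroup (N l)] [∀ l, Module ℤ_[p] (N l)]
    (t : ∀ ⦃i j : Λ⦄, i ≤ j → N i →ₗ[ℤ_[p]] N j)
    (hdivcoker : ∀ (i j : Λ) (hij : i ≤ j), ∀ x : N j, ∃ y : N j, ∃ z : N i,
      t hij z = x - (p : ℤ_[p]) • y)
    {L : Type*} [AddCommGroup L] [Module ℤ_[p] L] (hL : CofinGen p L)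
    (f : ∀ i, N i →ₗ[ℤ_[p]] L)
    (hf : ∀ (i j : Λ) (hij : i ≤ j), (f j).comp (t hij) = f i) :
    ∃ l₀ : Λ, ∀ l : Λ, l₀ ≤ l → LinearMap.range (f l) = LinearMap.range (f l₀) := by
  have : Module.Finite ℤ_[p] (L →ₗ[ℤ_[p]] QpModZp p) := hL
  let A (l : Λ) := ker (lcomp ℤ_[p] (QpModZp p) (f l))
  have hA : Antitone A := fun i j hij φ hφ => by
    simp only [A, mem_ker, lcomp_apply'] at hφ ⊢
    rw [← hf i j hij, ← comp_assoc, hφ, zero_comp]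
  obtain ⟨l₀, hl₀⟩ := Submodule.exists_forall_ge_eq_of_antitone hA fun i j hij φ hφ _ ha haφ =>
    PadicInt.mem_of_smul_mem (T := A i) (fun _ _ hpψ => mem_ker_lcomp_of_smul_mem
      (hdivcoker i j hij) (by rwa [hf i j hij]) hpψ) hφ ha haφ
  refine ⟨l₀, fun l hl => le_antisymm (QpModZp.range_le_range_of_ker_lcomp_le (hl₀ l hl).ge) ?_⟩
  rw [← hf l₀ l hl]
  exact range_comp_le_range _ _

/-- Stabilization of images: with hypotheses as in Sublemma 2.3 (inductive system of
cofinitely generated `ℤ_p`-modules with divisible cokernels of transitions, compatible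
maps `f_λ` to a cofinitely generated `L`), there is `λ₀` with
`Image(f_λ) = Image(f_{λ₀})` for all `λ ≥ λ₀`. -/
theorem stmt9 {p : ℕ} [Fact p.Prime]
    {Λ : Type*} [Preorder Λ] [IsDirected Λ (· ≤ ·)] [Nonempty Λ]
    (N : Λ → Type*) [∀ l, AddCommGroup (N l)] [∀ l, Module ℤ_[p] (N l)]
    (t : ∀ ⦃i j : Λ⦄, i ≤ j → N i →ₗ[ℤ_[p]] N j)
    (ht_id : ∀ (i : Λ) (x : N i), t (le_refl i) x = x)
    (ht_comp : ∀ (i j k : Λ) (hij : i ≤ j) (hjk : j ≤ k) (x : N i),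
      t hjk (t hij x) = t (hij.trans hjk) x)
    (hcofin : ∀ i, CofinGen p (N i))
    (hdivcoker : ∀ (i j : Λ) (hij : i ≤ j), ∀ x : N j, ∃ y : N j, ∃ z : N i,
      t hij z = x - (p : ℤ_[p]) • y)
    {L : Type*} [AddCommGroup L] [Module ℤ_[p] L] (hL : CofinGen p L)
    (f : ∀ i, N i →ₗ[ℤ_[p]] L)
    (hf : ∀ (i j : Λ) (hij : i ≤ j), (f j).comp (t hij) = f i) :
    ∃ l₀ : Λ, ∀ l : Λ, l₀ ≤ l → LinearMap.range (f l) = LinearMap.range (f l₀) :=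
  stmt9_general N t hdivcoker hL f hf
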